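/- arXiv:1701.01007 — 2 statements merged into one kernel-verified Lean document; each statement's English description precedes it below -/
import Mathlib

section
/- Let α, β ∈ (0,1), α + β ≠ 1, μ = (H(β)-H(α))/(1-α-β), and λ = 1/(1+2^μ). Then the quantity G₀ = α·log₂((1-λ)/λ) + log₂(1/(1-λ)) - H(α) equals G₁ = (1-β)·log₂((1-λ)/λ) + log₂(1/(1-λ)) - H(β). That is, with output distribution λ, the two conditional divergence expressions corresponding to the two channel inputs of the BSSC are equal. -/
/-!
The choice `λ = 1/(1+2^μ)` makes the log-odds `log₂((1-λ)/λ)` equal to `μ`, so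
`G₀ - G₁ = (α + β - 1) μ + H(β) - H(α)`, which vanishes by the definition of `μ`.
-/

/-- Binary entropy function (base 2), extended by `H 0 = H 1 = 0`. -/
noncomputable def binH (p : ℝ) : ℝ := -p * Real.logb 2 p - (1 - p) * Real.logb 2 (1 - p)

theorem Real.logb_odds_of_eq_inv_one_add_rpow {b μ lam : ℝ} (hb₀ : 0 < b) (hb₁ : b ≠ 1)
    (hlam : lam = 1 / (1 + b ^ μ)) : Real.logb b ((1 - lam) / lam) = μ := by
  have hpos : 0 < b ^ μ := Real.rpow_pos_of_pos hb₀ μ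
  have hodds : (1 - lam) / lam = b ^ μ := by
    rw [hlam]
    field_simp
    ring
  rw [hodds, Real.logb_rpow hb₀ hb₁]

theorem bssc_divergence_balance_general (α β : ℝ) (hab : α + β ≠ 1)
    (μ lam : ℝ) (hμ : μ = (binH β - binH α) / (1 - α - β))
    (hlam : lam = 1 / (1 + (2 : ℝ) ^ μ)) :
    α * Real.logb 2 ((1 - lam) / lam) + Real.logb 2 (1 / (1 - lam)) - binH α =
      (1 - β) * Real.logb 2 ((1 - lam) / lam) + Real.logb 2 (1 / (1 - lam)) - binH β := by
  have hodds : Real.logb 2 ((1 - lam) / lam) = μ :=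
    Real.logb_odds_of_eq_inv_one_add_rpow two_pos (by norm_num) hlam
  have hne : 1 - α - β ≠ 0 := fun h => hab (by linarith)
  have hbalance : μ * (1 - α - β) = binH β - binH α := by
    rw [hμ, div_mul_cancel₀ _ hne]
  rw [hodds]
  linear_combination -hbalance

/-- With the optimal output distribution `λ = 1/(1+2^μ)` of the BSSC, the two conditional
divergence expressions corresponding to the two channel inputs are equal:
`α·log₂((1-λ)/λ) + log₂(1/(1-λ)) - H(α) = (1-β)·log₂((1-λ)/λ) + log₂(1/(1-λ)) - H(β)`. -/
theorem bssc_divergence_balance (α β : ℝ) (hα : α ∈ Set.Ioo (0 : ℝ) 1)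
    (hβ : β ∈ Set.Ioo (0 : ℝ) 1) (hab : α + β ≠ 1)
    (μ lam : ℝ) (hμ : μ = (binH β - binH α) / (1 - α - β))
    (hlam : lam = 1 / (1 + (2 : ℝ) ^ μ)) :
    α * Real.logb 2 ((1 - lam) / lam) + Real.logb 2 (1 / (1 - lam)) - binH α =
      (1 - β) * Real.logb 2 ((1 - lam) / lam) + Real.logb 2 (1 / (1 - lam)) - binH β :=
  bssc_divergence_balance_general α β hab μ lam hμ hlam
end

section
/- Let α, β, κ ∈ (0,1) and define λ̄ = ακ + (1-κ)(1-β). If the channel input distribution of the BSSC is π(a = b₋₁ | b₋₁) = κ for both values of b₋₁, then the induced channel output transition distribution satisfies P^π(b = b₋₁ | b₋₁) = λ̄ for both values of b₋₁, and the conditional mutual information I(A;B | B₋₁ = b₋₁) equals H(λ̄) - κ·H(α) - (1-κ)·H(β), independently of b₋₁. -/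
noncomputable def entropy₂ {B : Type*} [Fintype B] (p : B → ℝ) : ℝ :=
  ∑ b, -p b * Real.logb 2 (p b)

/-- `I(A;B) = H(B) - H(B|A)` for the input law `π` and the channel `W a b = P(b|a)`. -/
theorem mutualInfo_eq_entropy₂_sub {A B : Type*} [Fintype A] [Fintype B]
    (π : A → ℝ) (W : A → B → ℝ) (hW : ∀ a b, W a b ≠ 0)
    (hq : ∀ b, ∑ a, π a * W a b ≠ 0) :
    ∑ a, ∑ b, π a * W a b * Real.logb 2 (W a b / ∑ a', π a' * W a' b)
      = entropy₂ (fun b => ∑ a, π a * W a b) - ∑ a, π a * entropy₂ (W a) := by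
  have hsplit : ∀ a b, π a * W a b * Real.logb 2 (W a b / ∑ a', π a' * W a' b)
      = π a * (W a b * Real.logb 2 (W a b))
        - π a * W a b * Real.logb 2 (∑ a', π a' * W a' b) := fun a b => by
    rw [Real.logb_div (hW a b) (hq b)]; ring
  have hcross : ∑ a, ∑ b, π a * W a b * Real.logb 2 (∑ a', π a' * W a' b)
      = ∑ b, (∑ a, π a * W a b) * Real.logb 2 (∑ a, π a * W a b) := by
    rw [Finset.sum_comm]
    exact Finset.sum_congr rfl fun b _ => (Finset.sum_mul _ _ _).symm
  simp only [hsplit, Finset.sum_sub_distrib, hcross, ← Finset.mul_sum, entropy₂, neg_mul,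
    Finset.sum_neg_distrib, mul_neg]
  ring

theorem binH_one_sub (p : ℝ) : binH (1 - p) = binH p := by
  simp only [binH, sub_sub_cancel]; ring

theorem entropy₂_fin_two {p : Fin 2 → ℝ} (hp : ∑ b, p b = 1) (i : Fin 2) :
    entropy₂ p = binH (p i) := by
  rw [Fin.sum_univ_two] at hp
  have h1 : p 1 = 1 - p 0 := by linarith
  fin_cases i <;> simp [entropy₂, binH, Fin.sum_univ_two, h1] <;> ring

/-- `P(b | a, b₋₁)`, arguments in the order `b a b₋₁`. -/
noncomputable def bsscChan (α β : ℝ) (b a bm : Fin 2) : ℝ :=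
  if a = bm then (if b = bm then α else 1 - α) else (if b = bm then 1 - β else β)

noncomputable def bsscInput (κ : ℝ) (a bm : Fin 2) : ℝ :=
  if a = bm then κ else 1 - κ

section BSSC

variable {α β κ : ℝ}

theorem bsscChan_pos (hα : α ∈ Set.Ioo (0 : ℝ) 1) (hβ : β ∈ Set.Ioo (0 : ℝ) 1)
    (b a bm : Fin 2) : 0 < bsscChan α β b a bm := by
  unfold bsscChan
  split_ifs <;> linarith [hα.1, hα.2, hβ.1, hβ.2]

theorem bsscInput_pos (hκ : κ ∈ Set.Ioo (0 : ℝ) 1) (a bm : Fin 2) : 0 < bsscInput κ a bm := by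
  unfold bsscInput
  split_ifs <;> linarith [hκ.1, hκ.2]

theorem sum_bsscChan (a bm : Fin 2) : ∑ b, bsscChan α β b a bm = 1 := by
  fin_cases a <;> fin_cases bm <;> simp [Fin.sum_univ_two, bsscChan]

theorem sum_bsscInput (bm : Fin 2) : ∑ a, bsscInput κ a bm = 1 := by
  fin_cases bm <;> simp [Fin.sum_univ_two, bsscInput]

theorem sum_bsscOutput (bm : Fin 2) :
    ∑ b, ∑ a, bsscInput κ a bm * bsscChan α β b a bm = 1 := by
  rw [Finset.sum_comm]
  simp only [← Finset.mul_sum, sum_bsscChan, mul_one, sum_bsscInput]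

theorem bsscOutput_self (bm : Fin 2) :
    ∑ a, bsscInput κ a bm * bsscChan α β bm a bm = α * κ + (1 - κ) * (1 - β) := by
  fin_cases bm <;> simp [Fin.sum_univ_two, bsscChan, bsscInput] <;> ring

theorem entropy₂_bsscChan (a bm : Fin 2) :
    entropy₂ (fun b => bsscChan α β b a bm) = if a = bm then binH α else binH β := by
  rw [entropy₂_fin_two (sum_bsscChan a bm) bm, bsscChan]
  by_cases h : a = bm <;> simp [h, binH_one_sub]

theorem bssc_condEntropy₂ (bm : Fin 2) :
    ∑ a, bsscInput κ a bm * entropy₂ (fun b => bsscChan α β b a bm)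
      = κ * binH α + (1 - κ) * binH β := by
  simp only [entropy₂_bsscChan]
  fin_cases bm <;> simp [Fin.sum_univ_two, bsscInput]
  ring

end BSSC

/-- For the BSSC with input distribution `π(a = b₋₁|b₋₁) = κ`, the induced output
transition probability is `λ̄ = ακ + (1-κ)(1-β)` for both values of `b₋₁`, and the
conditional mutual information equals `H(λ̄) - κH(α) - (1-κ)H(β)`, independently of `b₋₁`. -/
theorem bssc_constrained_output_and_MI (α β κ : ℝ)
    (hα : α ∈ Set.Ioo (0 : ℝ) 1) (hβ : β ∈ Set.Ioo (0 : ℝ) 1) (hκ : κ ∈ Set.Ioo (0 : ℝ) 1)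
    (chan : Fin 2 → Fin 2 → Fin 2 → ℝ)
    (hchan : ∀ b a bm, chan b a bm =
      if a = bm then (if b = bm then α else 1 - α) else (if b = bm then 1 - β else β))
    (π : Fin 2 → Fin 2 → ℝ)
    (hπ : ∀ a bm, π a bm = if a = bm then κ else 1 - κ) :
    (∀ bm : Fin 2, (∑ a : Fin 2, chan bm a bm * π a bm) = α * κ + (1 - κ) * (1 - β)) ∧
    (∀ bm : Fin 2,
      (∑ a : Fin 2, ∑ b : Fin 2, π a bm * chan b a bm *
          Real.logb 2 (chan b a bm / (∑ a' : Fin 2, π a' bm * chan b a' bm)))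
        = binH (α * κ + (1 - κ) * (1 - β)) - κ * binH α - (1 - κ) * binH β) := by
  obtain rfl : chan = bsscChan α β := funext fun b => funext fun a => funext (hchan b a)
  obtain rfl : π = bsscInput κ := funext fun a => funext (hπ a)
  refine ⟨fun bm => ?_, fun bm => ?_⟩
  · simpa only [mul_comm] using bsscOutput_self bm
  have hq : ∀ b, ∑ a, bsscInput κ a bm * bsscChan α β b a bm ≠ 0 := fun b =>
    (Finset.sum_pos (fun a _ => mul_pos (bsscInput_pos hκ a bm) (bsscChan_pos hα hβ b a bm))
      Finset.univ_nonempty).ne'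
  refine (mutualInfo_eq_entropy₂_sub (fun a => bsscInput κ a bm) (fun a b => bsscChan α β b a bm)
    (fun a b => (bsscChan_pos hα hβ b a bm).ne') hq).trans ?_
  rw [entropy₂_fin_two (sum_bsscOutput bm) bm, bsscOutput_self, bssc_condEntropy₂]
  ring
end
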